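/- Let A, B, C ⊆ ℝ be Borel sets of finite Lebesgue measure, and for a Borel set S of finite Lebesgue measure let S* denote its symmetric rearrangement, i.e., the open interval centered at 0 with the same Lebesgue measure as S. Then ∫∫ 1_A(x)·1_B(x−y)·1_C(y) dx dy ≤ ∫∫ 1_{A*}(x)·1_{B*}(x−y)·1_{C*}(y) dx dy, where the double integrals are over ℝ × ℝ with respect to Lebesgue measure. -/

import Mathlib

/-!
Write `K = 1_B * 1_C`, so that the left side is `∫_A K`. For every threshold `T` one has the
bathtub bound `∫_A K + ∫ min K T ≤ T |A| + ∫ K`, with equality when `K ≥ T` on `A` and `K ≤ T`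
off `A`. For the rearranged sets `K*` is a tent, even and decreasing in `|x|`, so equality holds
for the threshold `t = K*(|A|/2)`; moreover `min K* t` is the convolution of the centered
intervals of lengths `t` and `|B| + |C| - t`, so `∫ min K* t = t (|B| + |C| - t)`. As
`∫ K = |B| |C| = ∫ K*`, it remains to prove the continuous Pollard inequality
`t (|A| + |B| - t) ≤ ∫ min |A ∩ (y + B)| t dy` for `0 ≤ t ≤ |A|, |B|`, applied to `C` and `-B`.

For that, let `α`, `β` be the quantile functions of `A` and `B`, which push Lebesgue measure on
`(0, |A|)`, `(0, |B|)` forward to Lebesgue measure on `A`, `B`. Let `W` be the set of `(s, y)` with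
`0 < s < t` such that `α s - y` lies in `B` above its `s`-quantile, or `y + β s` lies in `A` above
its `s`-quantile. The slice of `W` at `s` is the disjoint union of two copies of these upper parts,
of measures `|B| - s` and `|A| - s`; the slice at `y` is, through `α` and `β`, a subset of
`(0, t)` of measure at most `|A ∩ (y + B)|`. Integrating in both orders gives the inequality.
-/

open MeasureTheory Set Filter Topology
open scoped ENNReal

/-- The symmetric rearrangement of a set of finite Lebesgue measure: the open interval
centered at `0` with the same Lebesgue measure. -/
noncomputable def symmRearrange (S : Set ℝ) : Set ℝ :=
  Set.Ioo (-((volume S).toReal / 2)) ((volume S).toReal / 2)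

noncomputable def volCdf (D : Set ℝ) (x : ℝ) : ℝ := (volume.restrict D (Iic x)).toReal

section Cdf

variable {D : Set ℝ}

lemma ofReal_volCdf (hDf : volume D ≠ ∞) (x : ℝ) :
    ENNReal.ofReal (volCdf D x) = volume.restrict D (Iic x) :=
  have := isFiniteMeasure_restrict.2 hDf
  ENNReal.ofReal_toReal (measure_ne_top _ _)

lemma volCdf_mono (hDf : volume D ≠ ∞) : Monotone (volCdf D) :=
  have := isFiniteMeasure_restrict.2 hDf
  fun _ _ hxy => ENNReal.toReal_mono (measure_ne_top _ _) (measure_mono (Iic_subset_Iic.2 hxy))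

lemma volCdf_le (hDf : volume D ≠ ∞) (x : ℝ) : volCdf D x ≤ (volume D).toReal := by
  rw [← Measure.restrict_apply_univ]
  have := isFiniteMeasure_restrict.2 hDf
  exact ENNReal.toReal_mono (measure_ne_top _ _) (measure_mono (subset_univ _))

lemma volCdf_le_add (hDf : volume D ≠ ∞) {x y : ℝ} (hxy : x ≤ y) :
    volCdf D y ≤ volCdf D x + (y - x) := by
  have := isFiniteMeasure_restrict.2 hDf
  have h : volume.restrict D (Iic y) ≤ volume.restrict D (Iic x) + ENNReal.ofReal (y - x) :=
    calc volume.restrict D (Iic y) = volume.restrict D (Iic x ∪ Ioc x y) := by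
          rw [Iic_union_Ioc_eq_Iic hxy]
      _ ≤ volume.restrict D (Iic x) + volume (Ioc x y) :=
          (measure_union_le _ _).trans (add_le_add_right (Measure.restrict_apply_le _ _) _)
      _ = _ := by rw [Real.volume_Ioc]
  have := ENNReal.toReal_mono (ENNReal.add_ne_top.2 ⟨measure_ne_top _ _, ENNReal.ofReal_ne_top⟩) h
  rwa [ENNReal.toReal_add (measure_ne_top _ _) ENNReal.ofReal_ne_top,
    ENNReal.toReal_ofReal (sub_nonneg.2 hxy)] at this

lemma continuous_volCdf (hDf : volume D ≠ ∞) : Continuous (volCdf D) := by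
  refine (LipschitzWith.of_le_add_mul 1 fun x y => ?_).continuous
  rcases le_total x y with hxy | hyx
  · have := volCdf_mono hDf hxy
    have := dist_nonneg (x := x) (y := y)
    push_cast
    linarith
  · have := volCdf_le_add hDf hyx
    rw [Real.dist_eq, abs_of_nonneg (sub_nonneg.2 hyx)]
    push_cast
    linarith

lemma tendsto_volCdf_atBot (hDf : volume D ≠ ∞) : Tendsto (volCdf D) atBot (𝓝 0) := by
  have := isFiniteMeasure_restrict.2 hDf
  have h := tendsto_measure_iInter_atBot (μ := volume.restrict D)
    (fun x => measurableSet_Iic.nullMeasurableSet) monotone_Iic ⟨0, measure_ne_top _ _⟩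
  rw [show ⋂ x : ℝ, Iic x = ∅ from eq_empty_of_forall_notMem fun x hx =>
    (mem_Iic.1 (mem_iInter.1 hx (x - 1))).not_gt (by linarith), measure_empty] at h
  exact (ENNReal.tendsto_toReal ENNReal.zero_ne_top).comp h

lemma tendsto_volCdf_atTop (hDf : volume D ≠ ∞) :
    Tendsto (volCdf D) atTop (𝓝 (volume D).toReal) := by
  have h := tendsto_measure_Iic_atTop (volume.restrict D)
  rw [Measure.restrict_apply_univ] at h
  exact (ENNReal.tendsto_toReal hDf).comp h

lemma measurableSet_lt_volCdf (hDf : volume D ≠ ∞) (s : ℝ) :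
    MeasurableSet {x | s < volCdf D x} :=
  measurableSet_lt measurable_const (continuous_volCdf hDf).measurable

end Cdf

-- Outside `(0, |D|)` the infimum is a junk value; replacing it by `0` keeps the map measurable.
noncomputable def volQuantile (D : Set ℝ) (s : ℝ) : ℝ :=
  if s ∈ Ioo 0 (volume D).toReal then sInf {x | s ≤ volCdf D x} else 0

section Quantile

variable {D : Set ℝ} {s : ℝ}

lemma volQuantile_le_iff (hDf : volume D ≠ ∞) (hs : s ∈ Ioo 0 (volume D).toReal) {x : ℝ} :
    volQuantile D s ≤ x ↔ s ≤ volCdf D x := by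
  obtain ⟨x₀, hx₀⟩ := ((tendsto_volCdf_atBot hDf).eventually (gt_mem_nhds hs.1)).exists
  obtain ⟨x₁, hx₁⟩ := ((tendsto_volCdf_atTop hDf).eventually (lt_mem_nhds hs.2)).exists
  have hbdd : BddBelow {x | s ≤ volCdf D x} := ⟨x₀, fun x hx =>
    le_of_lt (lt_of_not_ge fun hxx₀ => (hx.trans (volCdf_mono hDf hxx₀)).not_gt hx₀)⟩
  have hmem : sInf {x | s ≤ volCdf D x} ∈ {x | s ≤ volCdf D x} :=
    (isClosed_le continuous_const (continuous_volCdf hDf)).csInf_mem ⟨x₁, hx₁.le⟩ hbdd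
  rw [volQuantile, if_pos hs]
  exact ⟨fun h => hmem.trans (volCdf_mono hDf h), fun h => csInf_le hbdd h⟩

lemma volCdf_volQuantile (hDf : volume D ≠ ∞) (hs : s ∈ Ioo 0 (volume D).toReal) :
    volCdf D (volQuantile D s) = s := by
  refine le_antisymm ?_ ((volQuantile_le_iff hDf hs).1 le_rfl)
  have hleft : ∀ᶠ x in 𝓝[<] volQuantile D s, volCdf D x ≤ s :=
    eventually_nhdsWithin_of_forall fun x hx =>
      (not_le.1 fun h => (not_le.2 hx) ((volQuantile_le_iff hDf hs).2 h)).le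
  exact le_of_tendsto ((continuous_volCdf hDf).continuousAt.mono_left nhdsWithin_le_nhds) hleft

lemma measurable_volQuantile (hDf : volume D ≠ ∞) : Measurable (volQuantile D) := by
  refine measurable_of_Iic fun x => ?_
  have : volQuantile D ⁻¹' Iic x = (Ioo 0 (volume D).toReal ∩ Iic (volCdf D x)) ∪
      ((Ioo 0 (volume D).toReal)ᶜ ∩ {_s | 0 ≤ x}) := by
    ext s
    by_cases hs : s ∈ Ioo 0 (volume D).toReal
    · simp [volQuantile_le_iff hDf hs, hs]
    · simp [volQuantile, hs]
  rw [this]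
  exact (measurableSet_Ioo.inter measurableSet_Iic).union
    (measurableSet_Ioo.compl.inter (MeasurableSet.const _))

lemma volume_Iic_inter_Ioo {a c : ℝ} (hca : c ≤ a) :
    volume (Iic c ∩ Ioo 0 a) = ENNReal.ofReal c := by
  refine le_antisymm ?_ ?_
  · calc volume (Iic c ∩ Ioo 0 a) ≤ volume (Ioc 0 c) := measure_mono fun r hr => ⟨hr.2.1, hr.1⟩
      _ = ENNReal.ofReal c := by rw [Real.volume_Ioc, sub_zero]
  · calc ENNReal.ofReal c = volume (Ioo 0 c) := by rw [Real.volume_Ioo, sub_zero]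
      _ ≤ volume (Iic c ∩ Ioo 0 a) :=
        measure_mono fun r hr => ⟨hr.2.le, hr.1, hr.2.trans_le hca⟩

lemma map_volQuantile (hDf : volume D ≠ ∞) :
    (volume.restrict (Ioo 0 (volume D).toReal)).map (volQuantile D) = volume.restrict D := by
  have := isFiniteMeasure_restrict.2 hDf
  refine Measure.ext_of_Iic _ _ fun x => ?_
  have hpre : volQuantile D ⁻¹' Iic x ∩ Ioo 0 (volume D).toReal =
      Iic (volCdf D x) ∩ Ioo 0 (volume D).toReal := by
    ext s
    simp only [mem_inter_iff, mem_preimage, mem_Iic]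
    exact and_congr_left fun hs => volQuantile_le_iff hDf hs
  rw [Measure.map_apply (measurable_volQuantile hDf) measurableSet_Iic,
    Measure.restrict_apply (measurable_volQuantile hDf measurableSet_Iic), hpre,
    volume_Iic_inter_Ioo (volCdf_le hDf x), ofReal_volCdf hDf]

lemma volume_preimage_volQuantile_inter (hDf : volume D ≠ ∞) {E : Set ℝ} (hE : MeasurableSet E) :
    volume (volQuantile D ⁻¹' E ∩ Ioo 0 (volume D).toReal) = volume (E ∩ D) := by
  rw [← Measure.restrict_apply (measurable_volQuantile hDf hE), ← Measure.map_apply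
    (measurable_volQuantile hDf) hE, map_volQuantile hDf, Measure.restrict_apply hE]

lemma volume_lt_volCdf_inter (hDf : volume D ≠ ∞) (hs : s ∈ Ioo 0 (volume D).toReal) :
    volume ({x | s < volCdf D x} ∩ D) = ENNReal.ofReal ((volume D).toReal - s) := by
  have hE := measurableSet_lt_volCdf hDf s
  have hpre : volQuantile D ⁻¹' {x | s < volCdf D x} ∩ Ioo 0 (volume D).toReal =
      Ioo s (volume D).toReal := by
    ext r
    simp only [mem_inter_iff, mem_preimage, mem_ofPred_eq, mem_Ioo]
    constructor
    · rintro ⟨h, hr⟩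
      exact ⟨(volCdf_volQuantile hDf hr).symm ▸ h, hr.2⟩
    · rintro ⟨hsr, hra⟩
      have hr : r ∈ Ioo 0 (volume D).toReal := ⟨hs.1.trans hsr, hra⟩
      exact ⟨(volCdf_volQuantile hDf hr).symm ▸ hsr, hr⟩
  rw [← volume_preimage_volQuantile_inter hDf hE, hpre, Real.volume_Ioo]

lemma lt_volQuantile_of_lt_volCdf (hDf : volume D ≠ ∞) (hs : s ∈ Ioo 0 (volume D).toReal)
    {x : ℝ} (hx : s < volCdf D x) : volQuantile D s < x :=
  lt_of_not_ge fun h => hx.not_ge ((volCdf_mono hDf h).trans (volCdf_volQuantile hDf hs).le)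

end Quantile

noncomputable def indicatorConv {G : Type*} [MeasurableSpace G] [Sub G] (μ : Measure G)
    (B C : Set G) (x : G) : ℝ≥0∞ :=
  μ ({y | x - y ∈ B} ∩ C)

section Convolution

variable {G : Type*} [MeasurableSpace G] [AddGroup G] [MeasurableSub₂ G] {μ : Measure G}
  {A B C : Set G}

lemma lintegral_indicator_mul_indicator_sub_mul_indicator (hA : MeasurableSet A)
    (hB : MeasurableSet B) (hC : MeasurableSet C) :
    ∫⁻ x, ∫⁻ y, A.indicator (fun _ => (1 : ℝ≥0∞)) x * B.indicator (fun _ => 1) (x - y) *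
      C.indicator (fun _ => 1) y ∂μ ∂μ = ∫⁻ x in A, indicatorConv μ B C x ∂μ := by
  have hinner : ∀ x, ∫⁻ y, A.indicator (fun _ => (1 : ℝ≥0∞)) x * B.indicator (fun _ => 1) (x - y) *
      C.indicator (fun _ => 1) y ∂μ = A.indicator (indicatorConv μ B C) x := by
    intro x
    by_cases hx : x ∈ A
    · have hS : MeasurableSet ({y | x - y ∈ B} ∩ C) :=
        (measurable_const.sub measurable_id hB).inter hC
      simp only [indicator_of_mem hx, one_mul, indicatorConv, ← lintegral_indicator_one hS]
      congr 1
      ext y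
      by_cases hy : x - y ∈ B <;> by_cases hy' : y ∈ C <;> simp [indicator, hy, hy']
    · simp [hx]
  simp_rw [hinner, lintegral_indicator hA]

variable [SFinite μ]

lemma measurable_indicatorConv (hB : MeasurableSet B) (hC : MeasurableSet C) :
    Measurable (indicatorConv μ B C) :=
  measurable_measure_prodMk_left (((measurable_fst.sub measurable_snd) hB).inter
    (measurable_snd hC))

lemma lintegral_indicatorConv [MeasurableAdd G] [μ.IsAddRightInvariant] (hB : MeasurableSet B)
    (hC : MeasurableSet C) : ∫⁻ x, indicatorConv μ B C x ∂μ = μ B * μ C := by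
  have hS : MeasurableSet {p : G × G | p.1 - p.2 ∈ B ∧ p.2 ∈ C} :=
    ((measurable_fst.sub measurable_snd) hB).inter (measurable_snd hC)
  have hslice : ∀ y, μ ((fun x => (x, y)) ⁻¹' {p : G × G | p.1 - p.2 ∈ B ∧ p.2 ∈ C}) =
      C.indicator (fun _ => μ B) y := by
    intro y
    by_cases hy : y ∈ C
    · rw [indicator_of_mem hy, ← (measurePreserving_sub_right μ y).measure_preimage
        hB.nullMeasurableSet]
      congr 1
      ext x
      simp [hy]
    · simp [hy]
  calc ∫⁻ x, indicatorConv μ B C x ∂μ = μ.prod μ {p : G × G | p.1 - p.2 ∈ B ∧ p.2 ∈ C} :=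
        (Measure.prod_apply hS).symm
    _ = μ B * μ C := by
        rw [Measure.prod_apply_symm hS]
        simp_rw [hslice, lintegral_indicator hC, setLIntegral_const]

end Convolution

noncomputable def pollardSet (A B : Set ℝ) (t : ℝ) : Set (ℝ × ℝ) :=
  {p | p.1 ∈ Ioo 0 t ∧ (volQuantile A p.1 - p.2 ∈ {q | p.1 < volCdf B q} ∩ B ∨
    p.2 + volQuantile B p.1 ∈ {x | p.1 < volCdf A x} ∩ A)}

section Pollard

variable {A B : Set ℝ}

lemma measurableSet_pollardSet (hA : MeasurableSet A) (hB : MeasurableSet B)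
    (hAf : volume A ≠ ∞) (hBf : volume B ≠ ∞) (t : ℝ) : MeasurableSet (pollardSet A B t) := by
  have hα : Measurable fun p : ℝ × ℝ => volQuantile A p.1 :=
    (measurable_volQuantile hAf).comp measurable_fst
  have hβ : Measurable fun p : ℝ × ℝ => volQuantile B p.1 :=
    (measurable_volQuantile hBf).comp measurable_fst
  have hF := (continuous_volCdf hAf).measurable
  have hG := (continuous_volCdf hBf).measurable
  refine (measurable_fst measurableSet_Ioo).inter (MeasurableSet.union ?_ ?_)
  · exact (measurableSet_lt measurable_fst (hG.comp (hα.sub measurable_snd))).inter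
      ((hα.sub measurable_snd) hB)
  · exact (measurableSet_lt measurable_fst (hF.comp (measurable_snd.add hβ))).inter
      ((measurable_snd.add hβ) hA)

lemma volume_pollardSet_prodMk_left (hB : MeasurableSet B)
    (hAf : volume A ≠ ∞) (hBf : volume B ≠ ∞) {s t : ℝ} (hs : s ∈ Ioo 0 t)
    (hta : t ≤ (volume A).toReal) (htb : t ≤ (volume B).toReal) :
    volume (Prod.mk s ⁻¹' pollardSet A B t) =
      ENNReal.ofReal ((volume A).toReal - s) + ENNReal.ofReal ((volume B).toReal - s) := by
  have hsA : s ∈ Ioo 0 (volume A).toReal := ⟨hs.1, hs.2.trans_le hta⟩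
  have hsB : s ∈ Ioo 0 (volume B).toReal := ⟨hs.1, hs.2.trans_le htb⟩
  set S₁ := (fun y => volQuantile A s - y) ⁻¹' ({q | s < volCdf B q} ∩ B)
  set S₂ := (fun y => y + volQuantile B s) ⁻¹' ({x | s < volCdf A x} ∩ A)
  have hslice : Prod.mk s ⁻¹' pollardSet A B t = S₂ ∪ S₁ := by
    ext y
    simp only [pollardSet, mem_preimage, mem_ofPred_eq, hs, true_and, mem_union, S₁, S₂]
    exact or_comm
  -- `S₁` lies to the left of `volQuantile A s - volQuantile B s`, and `S₂` to its right
  have hdisj : Disjoint S₂ S₁ := by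
    refine disjoint_left.2 fun y h₂ h₁ => ?_
    have := lt_volQuantile_of_lt_volCdf hBf hsB h₁.1
    have := lt_volQuantile_of_lt_volCdf hAf hsA h₂.1
    linarith
  have hU : MeasurableSet ({q | s < volCdf B q} ∩ B) := (measurableSet_lt_volCdf hBf s).inter hB
  rw [hslice, measure_union hdisj (measurable_const.sub measurable_id hU),
    measure_preimage_add_right,
    (Measure.measurePreserving_sub_left volume _).measure_preimage hU.nullMeasurableSet,
    volume_lt_volCdf_inter hAf hsA, volume_lt_volCdf_inter hBf hsB]

lemma prodMk_right_preimage_pollardSet_subset (hAf : volume A ≠ ∞) (hBf : volume B ≠ ∞)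
    {t : ℝ} (hta : t ≤ (volume A).toReal) (htb : t ≤ (volume B).toReal) (y : ℝ) :
    (fun s => (s, y)) ⁻¹' pollardSet A B t ⊆
      (volQuantile A ⁻¹' {x | x - y ∈ B ∧ volCdf A x < volCdf B (x - y)} ∩
          Ioo 0 (volume A).toReal) ∪
        (volQuantile B ⁻¹' {q | y + q ∈ A ∧ volCdf B q < volCdf A (y + q)} ∩
          Ioo 0 (volume B).toReal) := by
  rintro s ⟨hs, ⟨hG, hB⟩ | ⟨hF, hA⟩⟩
  · change s < volCdf B (volQuantile A s - y) at hG
    have hsA : s ∈ Ioo 0 (volume A).toReal := ⟨hs.1, hs.2.trans_le hta⟩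
    refine Or.inl ⟨⟨hB, ?_⟩, hsA⟩
    rwa [volCdf_volQuantile hAf hsA]
  · change s < volCdf A (y + volQuantile B s) at hF
    change y + volQuantile B s ∈ A at hA
    have hsB : s ∈ Ioo 0 (volume B).toReal := ⟨hs.1, hs.2.trans_le htb⟩
    refine Or.inr ⟨⟨hA, ?_⟩, hsB⟩
    rwa [volCdf_volQuantile hBf hsB]

lemma volume_pollardSet_prodMk_right_le (hA : MeasurableSet A) (hB : MeasurableSet B)
    (hAf : volume A ≠ ∞) (hBf : volume B ≠ ∞) {t : ℝ}
    (hta : t ≤ (volume A).toReal) (htb : t ≤ (volume B).toReal) (y : ℝ) :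
    volume ((fun s => (s, y)) ⁻¹' pollardSet A B t) ≤
      min (volume ({x | x - y ∈ B} ∩ A)) (ENNReal.ofReal t) := by
  have hF : Measurable (volCdf A) := (continuous_volCdf hAf).measurable
  have hG : Measurable (volCdf B) := (continuous_volCdf hBf).measurable
  have hsub : Measurable fun x : ℝ => x - y := measurable_id.sub_const y
  have hadd : Measurable fun q : ℝ => y + q := measurable_const.add measurable_id
  set E₁ := {x | x - y ∈ B ∧ volCdf A x < volCdf B (x - y)}
  set E₂ := {q | y + q ∈ A ∧ volCdf B q < volCdf A (y + q)}
  set E₂' := {x | x - y ∈ B ∧ volCdf B (x - y) < volCdf A x}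
  have hE₁ : MeasurableSet E₁ := (hsub hB).inter (measurableSet_lt hF (hG.comp hsub))
  have hE₂ : MeasurableSet E₂ := (hadd hA).inter (measurableSet_lt hG (hF.comp hadd))
  have hE₂' : MeasurableSet E₂' := (hsub hB).inter (measurableSet_lt (hG.comp hsub) hF)
  have hE₂_shift : volume (E₂ ∩ B) = volume (E₂' ∩ A) := by
    rw [← (measurePreserving_sub_right volume y).measure_preimage (hE₂.inter hB).nullMeasurableSet]
    congr 1
    ext x
    simp only [mem_preimage, mem_inter_iff, mem_ofPred_eq, add_sub_cancel, E₂, E₂']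
    tauto
  have hdisj : Disjoint (E₁ ∩ A) (E₂' ∩ A) :=
    disjoint_left.2 fun x h₁ h₂ => h₁.1.2.not_gt h₂.1.2
  refine le_min ?_ ?_
  · calc volume ((fun s => (s, y)) ⁻¹' pollardSet A B t)
        ≤ volume (E₁ ∩ A) + volume (E₂ ∩ B) := by
          refine (measure_mono (prodMk_right_preimage_pollardSet_subset hAf hBf hta htb y)).trans
            ((measure_union_le _ _).trans_eq ?_)
          rw [volume_preimage_volQuantile_inter hAf hE₁, volume_preimage_volQuantile_inter hBf hE₂]
      _ = volume (E₁ ∩ A ∪ E₂' ∩ A) := by rw [hE₂_shift, measure_union hdisj (hE₂'.inter hA)]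
      _ ≤ volume ({x | x - y ∈ B} ∩ A) :=
          measure_mono (union_subset (fun x h => ⟨h.1.1, h.2⟩) fun x h => ⟨h.1.1, h.2⟩)
  · calc volume ((fun s => (s, y)) ⁻¹' pollardSet A B t) ≤ volume (Ioo 0 t) :=
          measure_mono fun s hs => hs.1
      _ = ENNReal.ofReal t := by rw [Real.volume_Ioo, sub_zero]

lemma setLIntegral_Ioo_ofReal_sub {a t : ℝ} (ht : 0 ≤ t) (hta : t ≤ a) :
    ∫⁻ s in Ioo 0 t, ENNReal.ofReal (a - s) = ENNReal.ofReal (a * t - t ^ 2 / 2) := by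
  have hint : IntegrableOn (fun s => a - s) (Ioo 0 t) :=
    (continuous_const.sub continuous_id).integrableOn_Icc.mono_set Ioo_subset_Icc_self
  rw [← ofReal_integral_eq_lintegral_ofReal hint ?_, ← integral_Ioc_eq_integral_Ioo,
    ← intervalIntegral.integral_of_le ht]
  · rw [intervalIntegral.integral_sub intervalIntegrable_const
      intervalIntegral.intervalIntegrable_id, intervalIntegral.integral_const, integral_id]
    simp only [sub_zero, smul_eq_mul]
    ring_nf
  · filter_upwards [ae_restrict_mem measurableSet_Ioo] with s hs
    simp only [Pi.zero_apply, sub_nonneg]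
    linarith [hs.2]

lemma ofReal_mul_le_lintegral_min_volume_inter (hA : MeasurableSet A) (hB : MeasurableSet B)
    (hAf : volume A ≠ ∞) (hBf : volume B ≠ ∞) {t : ℝ} (ht : 0 ≤ t)
    (hta : t ≤ (volume A).toReal) (htb : t ≤ (volume B).toReal) :
    ENNReal.ofReal (t * ((volume A).toReal + (volume B).toReal - t)) ≤
      ∫⁻ y, min (volume ({x | x - y ∈ B} ∩ A)) (ENNReal.ofReal t) := by
  have hW := measurableSet_pollardSet hA hB hAf hBf t
  calc ENNReal.ofReal (t * ((volume A).toReal + (volume B).toReal - t))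
      = ∫⁻ s in Ioo 0 t, (ENNReal.ofReal ((volume A).toReal - s) +
          ENNReal.ofReal ((volume B).toReal - s)) := by
        rw [lintegral_add_left (by fun_prop), setLIntegral_Ioo_ofReal_sub ht hta,
          setLIntegral_Ioo_ofReal_sub ht htb, ← ENNReal.ofReal_add (by nlinarith) (by nlinarith)]
        ring_nf
    _ = ∫⁻ s in Ioo 0 t, volume (Prod.mk s ⁻¹' pollardSet A B t) :=
        setLIntegral_congr_fun measurableSet_Ioo fun s hs =>
          (volume_pollardSet_prodMk_left hB hAf hBf hs hta htb).symm
    _ ≤ ∫⁻ s, volume (Prod.mk s ⁻¹' pollardSet A B t) := setLIntegral_le_lintegral _ _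
    _ = ∫⁻ y, volume ((fun s => (s, y)) ⁻¹' pollardSet A B t) := by
        rw [← Measure.prod_apply hW, Measure.prod_apply_symm hW]
    _ ≤ ∫⁻ y, min (volume ({x | x - y ∈ B} ∩ A)) (ENNReal.ofReal t) :=
        lintegral_mono (volume_pollardSet_prodMk_right_le hA hB hAf hBf hta htb)

open scoped Pointwise in
lemma ofReal_mul_le_lintegral_min_indicatorConv {B C : Set ℝ} (hB : MeasurableSet B)
    (hC : MeasurableSet C) (hBf : volume B ≠ ∞) (hCf : volume C ≠ ∞) {t : ℝ} (ht : 0 ≤ t)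
    (htb : t ≤ (volume B).toReal) (htc : t ≤ (volume C).toReal) :
    ENNReal.ofReal (t * ((volume B).toReal + (volume C).toReal - t)) ≤
      ∫⁻ x, min (indicatorConv volume B C x) (ENNReal.ofReal t) := by
  have hnegB : volume (-B) = volume B := Measure.measure_neg volume B
  have h := ofReal_mul_le_lintegral_min_volume_inter hC hB.neg hCf (hnegB ▸ hBf) ht htc
    (hnegB ▸ htb)
  have hset : ∀ x, {y | y - x ∈ -B} = {y | x - y ∈ B} := fun x => by ext y; simp
  simpa only [hnegB, hset, add_comm (volume C).toReal, indicatorConv] using h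

end Pollard

section Bathtub

variable {α : Type*} [MeasurableSpace α] {μ : Measure α} {K : α → ℝ≥0∞} {A : Set α}

lemma setLIntegral_add_lintegral_min_le (hK : Measurable K) (hA : MeasurableSet A) (T : ℝ≥0∞) :
    ∫⁻ x in A, K x ∂μ + ∫⁻ x, min (K x) T ∂μ ≤ T * μ A + ∫⁻ x, K x ∂μ := by
  rw [← lintegral_indicator hA, ← lintegral_add_left (hK.indicator hA), ← setLIntegral_const,
    ← lintegral_indicator hA, ← lintegral_add_left (measurable_const.indicator hA)]
  refine lintegral_mono fun x => ?_
  by_cases hx : x ∈ A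
  · simp only [indicator_of_mem hx]
    rw [add_comm]
    gcongr
    exact min_le_right _ _
  · simp only [indicator_of_notMem hx, zero_add]
    exact min_le_left _ _

lemma setLIntegral_add_lintegral_min_eq (hK : Measurable K) (hA : MeasurableSet A)
    {T : ℝ≥0∞} (hle : ∀ x ∈ A, T ≤ K x) (hge : ∀ x ∉ A, K x ≤ T) :
    ∫⁻ x in A, K x ∂μ + ∫⁻ x, min (K x) T ∂μ = T * μ A + ∫⁻ x, K x ∂μ := by
  rw [← lintegral_indicator hA, ← lintegral_add_left (hK.indicator hA), ← setLIntegral_const,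
    ← lintegral_indicator hA, ← lintegral_add_left (measurable_const.indicator hA)]
  refine lintegral_congr fun x => ?_
  by_cases hx : x ∈ A
  · simp [hx, min_eq_right (hle x hx), add_comm (K x)]
  · simp [hx, min_eq_left (hge x hx)]

end Bathtub

section Intervals

lemma indicatorConv_Ioo (b c x : ℝ) :
    indicatorConv volume (Ioo (-(b / 2)) (b / 2)) (Ioo (-(c / 2)) (c / 2)) x =
      ENNReal.ofReal (min (min b c) ((b + c) / 2 - |x|)) := by
  have hpre : {y | x - y ∈ Ioo (-(b / 2)) (b / 2)} = Ioo (x - b / 2) (x + b / 2) := by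
    rw [← sub_neg_eq_add]
    exact preimage_const_sub_Ioo x (-(b / 2)) (b / 2)
  rw [indicatorConv, hpre, Ioo_inter_Ioo, Real.volume_Ioo]
  congr 1
  rcases abs_cases x with ⟨hx, hx₀⟩ | ⟨hx, hx₀⟩ <;> rw [hx] <;>
    simp only [min_def, max_def] <;> split_ifs <;> linarith

lemma min_indicatorConv_Ioo {b c t : ℝ} (htb : t ≤ b) (htc : t ≤ c) (x : ℝ) :
    min (indicatorConv volume (Ioo (-(b / 2)) (b / 2)) (Ioo (-(c / 2)) (c / 2)) x)
      (ENNReal.ofReal t) = indicatorConv volume (Ioo (-(t / 2)) (t / 2))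
        (Ioo (-((b + c - t) / 2)) ((b + c - t) / 2)) x := by
  rw [indicatorConv_Ioo, indicatorConv_Ioo, ← ENNReal.ofReal_min]
  congr 1
  simp only [min_def]
  split_ifs <;> linarith

lemma lintegral_min_indicatorConv_Ioo {b c t : ℝ} (ht : 0 ≤ t) (htb : t ≤ b) (htc : t ≤ c) :
    ∫⁻ x, min (indicatorConv volume (Ioo (-(b / 2)) (b / 2)) (Ioo (-(c / 2)) (c / 2)) x)
      (ENNReal.ofReal t) = ENNReal.ofReal (t * (b + c - t)) := by
  simp_rw [min_indicatorConv_Ioo htb htc]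
  rw [lintegral_indicatorConv measurableSet_Ioo measurableSet_Ioo, Real.volume_Ioo,
    Real.volume_Ioo, ← ENNReal.ofReal_mul (by linarith)]
  ring_nf

lemma measurableSet_symmRearrange (S : Set ℝ) : MeasurableSet (symmRearrange S) :=
  measurableSet_Ioo

lemma volume_symmRearrange {S : Set ℝ} (hSf : volume S ≠ ∞) :
    volume (symmRearrange S) = volume S := by
  rw [symmRearrange, Real.volume_Ioo, sub_neg_eq_add, add_halves, ENNReal.ofReal_toReal hSf]

lemma exists_setLIntegral_indicatorConv_symmRearrange_add_eq {A B C : Set ℝ}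
    (hAf : volume A ≠ ∞) (hBf : volume B ≠ ∞) (hCf : volume C ≠ ∞) :
    ∃ t, 0 ≤ t ∧ t ≤ (volume B).toReal ∧ t ≤ (volume C).toReal ∧
      (∫⁻ x in symmRearrange A, indicatorConv volume (symmRearrange B) (symmRearrange C) x) +
        ENNReal.ofReal (t * ((volume B).toReal + (volume C).toReal - t)) =
      ENNReal.ofReal t * volume A + volume B * volume C := by
  set a := (volume A).toReal
  set b := (volume B).toReal
  set c := (volume C).toReal
  set K := indicatorConv volume (symmRearrange B) (symmRearrange C)
  -- the value of the tent `K` at the endpoints of `symmRearrange A`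
  set t := max 0 (min (min b c) ((b + c) / 2 - a / 2))
  have htb : t ≤ b := max_le ENNReal.toReal_nonneg ((min_le_left _ _).trans (min_le_left _ _))
  have htc : t ≤ c := max_le ENNReal.toReal_nonneg ((min_le_left _ _).trans (min_le_right _ _))
  have hK : ∀ x, K x = ENNReal.ofReal (min (min b c) ((b + c) / 2 - |x|)) :=
    indicatorConv_Ioo b c
  have hle : ∀ x ∈ symmRearrange A, ENNReal.ofReal t ≤ K x := fun x hx => by
    rw [hK, ENNReal.ofReal_max, ENNReal.ofReal_zero]
    exact max_le zero_le (ENNReal.ofReal_le_ofReal (min_le_min le_rfl (by linarith [abs_lt.2 hx])))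
  have hge : ∀ x ∉ symmRearrange A, K x ≤ ENNReal.ofReal t := fun x hx => by
    refine (hK x).trans_le (ENNReal.ofReal_le_ofReal (le_max_of_le_right ?_))
    exact min_le_min le_rfl (by linarith [not_lt.1 fun h => hx (abs_lt.1 h)])
  have htrunc : ∫⁻ x, min (K x) (ENNReal.ofReal t) = ENNReal.ofReal (t * (b + c - t)) :=
    lintegral_min_indicatorConv_Ioo (le_max_left _ _) htb htc
  have hmass : ∫⁻ x, K x = volume (symmRearrange B) * volume (symmRearrange C) :=
    lintegral_indicatorConv (measurableSet_symmRearrange B) (measurableSet_symmRearrange C)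
  refine ⟨t, le_max_left _ _, htb, htc, ?_⟩
  rw [← htrunc, setLIntegral_add_lintegral_min_eq (K := K) (measurable_indicatorConv
      (measurableSet_symmRearrange B) (measurableSet_symmRearrange C))
      (measurableSet_symmRearrange A) hle hge, hmass,
    volume_symmRearrange hAf, volume_symmRearrange hBf, volume_symmRearrange hCf]

end Intervals

lemma setLIntegral_indicatorConv_add_ofReal_le {A B C : Set ℝ} (hA : MeasurableSet A)
    (hB : MeasurableSet B) (hC : MeasurableSet C) (hBf : volume B ≠ ∞) (hCf : volume C ≠ ∞)
    {t : ℝ} (ht : 0 ≤ t) (htb : t ≤ (volume B).toReal) (htc : t ≤ (volume C).toReal) :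
    (∫⁻ x in A, indicatorConv volume B C x) +
        ENNReal.ofReal (t * ((volume B).toReal + (volume C).toReal - t)) ≤
      ENNReal.ofReal t * volume A + volume B * volume C := by
  calc (∫⁻ x in A, indicatorConv volume B C x) +
        ENNReal.ofReal (t * ((volume B).toReal + (volume C).toReal - t))
      ≤ (∫⁻ x in A, indicatorConv volume B C x) +
          ∫⁻ x, min (indicatorConv volume B C x) (ENNReal.ofReal t) := by
        gcongr
        exact ofReal_mul_le_lintegral_min_indicatorConv hB hC hBf hCf ht htb htc
    _ ≤ ENNReal.ofReal t * volume A + ∫⁻ x, indicatorConv volume B C x :=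
        setLIntegral_add_lintegral_min_le (measurable_indicatorConv hB hC) hA _
    _ = ENNReal.ofReal t * volume A + volume B * volume C := by
        rw [lintegral_indicatorConv hB hC]

/-- F. Riesz's rearrangement inequality for indicator functions on `ℝ`. -/
theorem stmt_13 (A B C : Set ℝ)
    (hA : MeasurableSet A) (hB : MeasurableSet B) (hC : MeasurableSet C)
    (hAf : volume A ≠ ⊤) (hBf : volume B ≠ ⊤) (hCf : volume C ≠ ⊤) :
    (∫⁻ x, ∫⁻ y, A.indicator (fun _ => (1 : ENNReal)) x *
        B.indicator (fun _ => (1 : ENNReal)) (x - y) *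
        C.indicator (fun _ => (1 : ENNReal)) y) ≤
    (∫⁻ x, ∫⁻ y, (symmRearrange A).indicator (fun _ => (1 : ENNReal)) x *
        (symmRearrange B).indicator (fun _ => (1 : ENNReal)) (x - y) *
        (symmRearrange C).indicator (fun _ => (1 : ENNReal)) y) := by
  obtain ⟨t, ht, htb, htc, heq⟩ :=
    exists_setLIntegral_indicatorConv_symmRearrange_add_eq hAf hBf hCf
  rw [lintegral_indicator_mul_indicator_sub_mul_indicator hA hB hC,
    lintegral_indicator_mul_indicator_sub_mul_indicator (measurableSet_symmRearrange A)
      (measurableSet_symmRearrange B) (measurableSet_symmRearrange C)]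
  exact ENNReal.le_of_add_le_add_right ENNReal.ofReal_ne_top
    ((setLIntegral_indicatorConv_add_ofReal_le hA hB hC hBf hCf ht htb htc).trans_eq heq.symm)
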